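/- There exists a sequence of positive reals (ε_T)_{T≥1} with ε_T → 0 such that, ℙ-almost surely, the inequality Σ_{p ∈ D} ‖ (1/T) Σ_{t=1}^T 1{p_t = p} (δ_{X_t} − p) ‖ ≤ ε_T holds for all but finitely many T. In words: the honest forecaster, who at each period announces the conditional law p_t of that period's state, fails the ε_T-calibration test only finitely many times almost surely. -/

import Mathlib

/-!
For a forecast value `c` and a state `a`, the `a`-coordinate of
`∑_{t<T} 1{p_t = c} (δ_{X_t} - c)` is, up to a null set, a martingale with increments bounded
by `1 + |c a|`: on the event `{p_t = c}` the conditional probability of `X_t = a` is exactly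
`c a`. A martingale with increments bounded by `B` has fourth moment at most `5 B⁴ T²`, so by
Markov's inequality it exceeds `(T+1)^(7/8)` with probability `O((T+1)^(-3/2))`, which is
summable; by Borel–Cantelli it eventually stays below `(T+1)^(7/8)`. Dividing by `T` and summing
over the finitely many `c` and `a` gives `ε_T = O((T+1)^(-1/8))`.
-/

open Filter MeasureTheory

noncomputable section

variable {Ω : Type*} [Fintype Ω] [DecidableEq Ω]

def diracVec (ω : Ω) : EuclideanSpace ℝ Ω := WithLp.toLp 2 (fun a => if a = ω then 1 else 0)

lemma sq_add_le_of_abs_le {s y B : ℝ} (hy : |y| ≤ B) :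
    (s + y) ^ 2 ≤ s ^ 2 + 2 * (s * y) + B ^ 2 := by
  nlinarith [sq_le_sq' (neg_le_of_abs_le hy) (le_of_abs_le hy)]

lemma pow_four_add_le_of_abs_le {s y M B : ℝ} (hs : |s| ≤ M) (hy : |y| ≤ B) :
    (s + y) ^ 4 ≤ s ^ 4 + 4 * (s ^ 3 * y) + 6 * B ^ 2 * s ^ 2 + (4 * M * B ^ 3 + B ^ 4) := by
  have hy2 : y ^ 2 ≤ B ^ 2 := sq_le_sq' (neg_le_of_abs_le hy) (le_of_abs_le hy)
  have hsy3 : s * y ^ 3 ≤ M * B ^ 3 := by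
    calc s * y ^ 3 ≤ |s| * |y| ^ 3 := by rw [← abs_pow, ← abs_mul]; exact le_abs_self _
      _ ≤ M * B ^ 3 := by gcongr; exact (abs_nonneg s).trans hs
  have hy4 : y ^ 4 ≤ B ^ 4 := by
    simpa [← abs_pow, abs_of_nonneg (by positivity : (0 : ℝ) ≤ y ^ 4)] using
      pow_le_pow_left₀ (abs_nonneg y) hy 4
  nlinarith [mul_le_mul_of_nonneg_left hy2 (sq_nonneg s)]

lemma inv_mul_add_one_rpow_le {x : ℝ} (hx : 1 ≤ x) :
    x⁻¹ * (x + 1) ^ (7 / 8 : ℝ) ≤ 2 * (x + 1) ^ (-(1 / 8) : ℝ) := by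
  have hx1 : 0 < x + 1 := by linarith
  have hsplit : (x + 1) ^ (7 / 8 : ℝ) = (x + 1) * (x + 1) ^ (-(1 / 8) : ℝ) := by
    rw [← Real.rpow_one_add' hx1.le (by norm_num)]
    norm_num
  rw [hsplit, ← mul_assoc]
  gcongr
  rw [inv_mul_le_iff₀ (by linarith)]
  linarith

lemma EuclideanSpace.norm_le_sum_abs {ι : Type*} [Fintype ι] (v : EuclideanSpace ℝ ι) :
    ‖v‖ ≤ ∑ i, |v i| := by
  classical
  calc ‖v‖ = ‖∑ i, v i • EuclideanSpace.single i (1 : ℝ)‖ := by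
        congr 1; ext j; simp [Pi.single_apply]
    _ ≤ ∑ i, ‖v i • EuclideanSpace.single i (1 : ℝ)‖ := norm_sum_le _ _
    _ = ∑ i, |v i| := by simp [norm_smul]

lemma EuclideanSpace.norm_inv_smul_le_of_abs_lt {ι : Type*} [Fintype ι] {v : EuclideanSpace ℝ ι}
    {x : ℝ} (hx : 1 ≤ x) (hv : ∀ i, |v i| < (x + 1) ^ (7 / 8 : ℝ)) :
    ‖x⁻¹ • v‖ ≤ 2 * Fintype.card ι * (x + 1) ^ (-(1 / 8) : ℝ) := by
  calc ‖x⁻¹ • v‖ = x⁻¹ * ‖v‖ := by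
        rw [norm_smul, Real.norm_of_nonneg (inv_nonneg.mpr (by linarith))]
    _ ≤ x⁻¹ * (Fintype.card ι * (x + 1) ^ (7 / 8 : ℝ)) := by
        gcongr
        calc ‖v‖ ≤ ∑ i, |v i| := v.norm_le_sum_abs
          _ ≤ ∑ _i : ι, (x + 1) ^ (7 / 8 : ℝ) := Finset.sum_le_sum fun i _ => (hv i).le
          _ = _ := by simp
    _ = Fintype.card ι * (x⁻¹ * (x + 1) ^ (7 / 8 : ℝ)) := by ring
    _ ≤ Fintype.card ι * (2 * (x + 1) ^ (-(1 / 8) : ℝ)) := by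
        exact mul_le_mul_of_nonneg_left (inv_mul_add_one_rpow_le hx) (Nat.cast_nonneg _)
    _ = _ := by ring

lemma ae_eventually_abs_lt_rpow_of_integral_pow_four_le {Ξ : Type*} {m0 : MeasurableSpace Ξ}
    {μ : Measure Ξ} [IsFiniteMeasure μ] {f : ℕ → Ξ → ℝ} {C : ℝ}
    (hf : ∀ T, Integrable (fun ξ => f T ξ ^ 4) μ)
    (hC : ∀ T : ℕ, ∫ ξ, f T ξ ^ 4 ∂μ ≤ C * ((T : ℝ) + 1) ^ 2) :
    ∀ᵐ ξ ∂μ, ∀ᶠ T in atTop, |f T ξ| < ((T : ℝ) + 1) ^ (7 / 8 : ℝ) := by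
  set r : ℕ → ℝ := fun T => ((T : ℝ) + 1) ^ (7 / 8 : ℝ) with hr
  have hC0 : 0 ≤ C := by
    simpa using (integral_nonneg fun ξ => by positivity).trans (hC 0)
  have hmarkov : ∀ T : ℕ,
      μ.real {ξ | r T ^ 4 ≤ f T ξ ^ 4} ≤ C * ((T : ℝ) + 1) ^ (-(3 / 2) : ℝ) := by
    intro T
    have hT : (0 : ℝ) < (T : ℝ) + 1 := by positivity
    have hr4 : r T ^ 4 = ((T : ℝ) + 1) ^ 2 * ((T : ℝ) + 1) ^ (3 / 2 : ℝ) := by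
      rw [hr, ← Real.rpow_natCast, ← Real.rpow_mul hT.le, ← Real.rpow_natCast,
        ← Real.rpow_add hT]
      norm_num
    have hm := (mul_meas_ge_le_integral_of_nonneg (ae_of_all _ fun ξ => by positivity) (hf T)
      (r T ^ 4)).trans (hC T)
    rw [Real.rpow_neg hT.le, ← div_eq_mul_inv, le_div_iff₀ (by positivity)]
    refine le_of_mul_le_mul_left ?_ (by positivity : (0 : ℝ) < ((T : ℝ) + 1) ^ 2)
    calc _ = r T ^ 4 * μ.real {ξ | r T ^ 4 ≤ f T ξ ^ 4} := by rw [hr4]; ring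
      _ ≤ _ := hm
      _ = _ := mul_comm _ _
  have hsum : Summable fun T : ℕ => C * ((T : ℝ) + 1) ^ (-(3 / 2) : ℝ) := by
    refine Summable.mul_left C ?_
    simpa using (summable_nat_add_iff 1).mpr
      (Real.summable_nat_rpow.mpr (by norm_num : (-(3 / 2) : ℝ) < -1))
  have hBC := ae_eventually_notMem (μ := μ) (s := fun T => {ξ | r T ^ 4 ≤ f T ξ ^ 4}) (by
    refine ne_top_of_le_ne_top ?_ (ENNReal.tsum_le_tsum fun T =>
      (ofReal_measureReal (measure_ne_top μ _)).symm.le.trans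
        (ENNReal.ofReal_le_ofReal (hmarkov T)))
    rw [← ENNReal.ofReal_tsum_of_nonneg (fun T => by positivity) hsum]
    exact ENNReal.ofReal_ne_top)
  filter_upwards [hBC] with ξ hξ
  filter_upwards [hξ] with T hT
  rw [not_le, ← (show Even 4 by decide).pow_abs] at hT
  exact (pow_lt_pow_iff_left₀ (abs_nonneg _) (by positivity) (by norm_num)).mp hT

section Increments

variable {Ξ : Type*} {m0 : MeasurableSpace Ξ} {μ : Measure Ξ} {𝒢 : Filtration ℕ m0}
  {S : ℕ → Ξ → ℝ} {B : ℝ}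

lemma abs_le_mul_of_abs_sub_le (hS0 : S 0 = 0) (hinc : ∀ T ξ, |S (T + 1) ξ - S T ξ| ≤ B)
    (T : ℕ) (ξ : Ξ) : |S T ξ| ≤ B * T := by
  induction T with
  | zero => simp [hS0]
  | succ T ih =>
    push_cast
    linarith [abs_sub_abs_le_abs_sub (S (T + 1) ξ) (S T ξ), hinc T ξ]

lemma martingale_sum_range_of_condExp_ae_eq_zero {E : Type*} [IsFiniteMeasure μ]
    [NormedAddCommGroup E] [NormedSpace ℝ E] [CompleteSpace E] {Y : ℕ → Ξ → E}
    (hY : ∀ t, StronglyMeasurable[𝒢 (t + 1)] (Y t)) (hint : ∀ t, Integrable (Y t) μ)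
    (hY0 : ∀ t, μ[Y t | 𝒢 t] =ᵐ[μ] 0) :
    Martingale (fun T => ∑ t ∈ Finset.range T, Y t) 𝒢 μ :=
  martingale_of_condExp_sub_eq_zero_nat
    (fun T => Finset.stronglyMeasurable_sum _ fun t ht =>
      (hY t).mono (𝒢.mono (Finset.mem_range.mp ht)))
    (fun T => integrable_finsetSum' _ fun t _ => hint t)
    (fun T => by simpa [Finset.sum_range_succ] using hY0 T)

end Increments

namespace MeasureTheory.Martingale

variable {Ξ : Type*} {m0 : MeasurableSpace Ξ} {μ : Measure Ξ} [IsFiniteMeasure μ]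
  {𝒢 : Filtration ℕ m0} {S : ℕ → Ξ → ℝ} {B : ℝ}

lemma condExp_succ_sub_ae_eq_zero (hS : Martingale S 𝒢 μ) (T : ℕ) :
    μ[S (T + 1) - S T | 𝒢 T] =ᵐ[μ] 0 := by
  filter_upwards [condExp_sub (hS.integrable (T + 1)) (hS.integrable T) (𝒢 T),
    hS.condExp_ae_eq T.le_succ] with ξ hsub hsucc
  rw [hsub, Pi.sub_apply, hsucc,
    condExp_of_stronglyMeasurable (𝒢.le T) (hS.stronglyMeasurable T) (hS.integrable T)]
  simp

lemma integral_mul_succ_sub_eq_zero (hS : Martingale S 𝒢 μ) {T : ℕ} {f : Ξ → ℝ}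
    (hf : StronglyMeasurable[𝒢 T] f) (hfS : Integrable (f * (S (T + 1) - S T)) μ) :
    ∫ ξ, f ξ * (S (T + 1) ξ - S T ξ) ∂μ = 0 := by
  have hpull := condExp_mul_of_stronglyMeasurable_left hf hfS
    ((hS.integrable (T + 1)).sub (hS.integrable T))
  calc ∫ ξ, f ξ * (S (T + 1) ξ - S T ξ) ∂μ = ∫ ξ, μ[f * (S (T + 1) - S T) | 𝒢 T] ξ ∂μ :=
        (integral_condExp (𝒢.le T)).symm
    _ = 0 := by
        rw [integral_congr_ae (hpull.trans ?_), integral_zero]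
        filter_upwards [hS.condExp_succ_sub_ae_eq_zero T] with ξ hξ
        simp [hξ]

lemma integrable_pow_mul_pow (hS : Martingale S 𝒢 μ) (hS0 : S 0 = 0)
    (hinc : ∀ T ξ, |S (T + 1) ξ - S T ξ| ≤ B) (T k j : ℕ) :
    Integrable (fun ξ => S T ξ ^ k * (S (T + 1) ξ - S T ξ) ^ j) μ := by
  have hmeas : ∀ T, StronglyMeasurable (S T) := fun T => (hS.stronglyMeasurable T).mono (𝒢.le T)
  refine Integrable.of_bound
    (((hmeas T).pow k).mul (((hmeas (T + 1)).sub (hmeas T)).pow j)).aestronglyMeasurable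
    ((B * T) ^ k * B ^ j) (ae_of_all _ fun ξ => ?_)
  have hB : 0 ≤ B := (abs_nonneg _).trans (hinc T ξ)
  rw [Real.norm_eq_abs, abs_mul, abs_pow, abs_pow]
  gcongr
  exacts [abs_le_mul_of_abs_sub_le hS0 hinc T ξ, hinc T ξ]

variable [IsProbabilityMeasure μ]

lemma integral_sq_le (hS : Martingale S 𝒢 μ) (hS0 : S 0 = 0)
    (hinc : ∀ T ξ, |S (T + 1) ξ - S T ξ| ≤ B) (T : ℕ) :
    ∫ ξ, S T ξ ^ 2 ∂μ ≤ B ^ 2 * T := by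
  induction T with
  | zero => simp [hS0]
  | succ T ih =>
    have hint := hS.integrable_pow_mul_pow hS0 hinc T
    have hS2 : Integrable (fun ξ => S T ξ ^ 2) μ := by simpa using hint 2 0
    have hSD : Integrable (fun ξ => S T ξ * (S (T + 1) ξ - S T ξ)) μ := by simpa using hint 1 1
    have hcross : ∫ ξ, S T ξ * (S (T + 1) ξ - S T ξ) ∂μ = 0 :=
      hS.integral_mul_succ_sub_eq_zero (hS.stronglyMeasurable T) hSD
    calc ∫ ξ, S (T + 1) ξ ^ 2 ∂μ
        ≤ ∫ ξ, (S T ξ ^ 2 + 2 * (S T ξ * (S (T + 1) ξ - S T ξ)) + B ^ 2) ∂μ := by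
          refine integral_mono_of_nonneg (ae_of_all _ fun ξ => sq_nonneg _)
            ((hS2.add (hSD.const_mul 2)).add (integrable_const _)) (ae_of_all _ fun ξ => ?_)
          simpa using sq_add_le_of_abs_le (s := S T ξ) (hinc T ξ)
      _ = ∫ ξ, S T ξ ^ 2 ∂μ + B ^ 2 := by
          rw [integral_add ?_ (integrable_const _), integral_add hS2 (hSD.const_mul 2),
            integral_const_mul, hcross]
          · simp
          · exact hS2.add (hSD.const_mul 2)
      _ ≤ B ^ 2 * (T + 1 : ℕ) := by push_cast; linarith

lemma integral_pow_four_le (hS : Martingale S 𝒢 μ) (hS0 : S 0 = 0)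
    (hinc : ∀ T ξ, |S (T + 1) ξ - S T ξ| ≤ B) (T : ℕ) :
    ∫ ξ, S T ξ ^ 4 ∂μ ≤ 5 * B ^ 4 * T ^ 2 := by
  induction T with
  | zero => simp [hS0]
  | succ T ih =>
    have hint := hS.integrable_pow_mul_pow hS0 hinc T
    have hS4 : Integrable (fun ξ => S T ξ ^ 4) μ := by simpa using hint 4 0
    have hS3D : Integrable (fun ξ => S T ξ ^ 3 * (S (T + 1) ξ - S T ξ)) μ := by
      simpa using hint 3 1
    have hS2 : Integrable (fun ξ => S T ξ ^ 2) μ := by simpa using hint 2 0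
    have hcross : ∫ ξ, S T ξ ^ 3 * (S (T + 1) ξ - S T ξ) ∂μ = 0 :=
      hS.integral_mul_succ_sub_eq_zero ((hS.stronglyMeasurable T).pow 3) hS3D
    have hsq := hS.integral_sq_le hS0 hinc T
    set K := 4 * (B * T) * B ^ 3 + B ^ 4
    calc ∫ ξ, S (T + 1) ξ ^ 4 ∂μ
        ≤ ∫ ξ, (S T ξ ^ 4 + 4 * (S T ξ ^ 3 * (S (T + 1) ξ - S T ξ))
            + 6 * B ^ 2 * S T ξ ^ 2 + K) ∂μ := by
          refine integral_mono_of_nonneg (ae_of_all _ fun ξ => by positivity)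
            (((hS4.add (hS3D.const_mul 4)).add (hS2.const_mul _)).add (integrable_const _))
            (ae_of_all _ fun ξ => ?_)
          simpa [K] using pow_four_add_le_of_abs_le (s := S T ξ)
            (abs_le_mul_of_abs_sub_le hS0 hinc T ξ) (hinc T ξ)
      _ = ∫ ξ, S T ξ ^ 4 ∂μ + 6 * B ^ 2 * ∫ ξ, S T ξ ^ 2 ∂μ + K := by
          rw [integral_add ?_ (integrable_const _), integral_add ?_ (hS2.const_mul _),
            integral_add hS4 (hS3D.const_mul 4), integral_const_mul, integral_const_mul, hcross]
          · simp
          · exact hS4.add (hS3D.const_mul 4)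
          · exact (hS4.add (hS3D.const_mul 4)).add (hS2.const_mul _)
      _ ≤ 5 * B ^ 4 * (T + 1 : ℕ) ^ 2 := by
          push_cast
          nlinarith [mul_le_mul_of_nonneg_left hsq (sq_nonneg B)]

lemma ae_eventually_abs_lt_rpow (hS : Martingale S 𝒢 μ) (hS0 : S 0 = 0)
    (hinc : ∀ T ξ, |S (T + 1) ξ - S T ξ| ≤ B) :
    ∀ᵐ ξ ∂μ, ∀ᶠ T in atTop, |S T ξ| < ((T : ℝ) + 1) ^ (7 / 8 : ℝ) :=
  ae_eventually_abs_lt_rpow_of_integral_pow_four_le (C := 5 * B ^ 4)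
    (fun T => by simpa using hS.integrable_pow_mul_pow hS0 hinc T 4 0)
    (fun T => (hS.integral_pow_four_le hS0 hinc T).trans (by gcongr; linarith))

end MeasureTheory.Martingale

section Forecaster

variable {Ξ : Type*} {m0 : MeasurableSpace Ξ} (ℙ : Measure Ξ) (𝒢 : Filtration ℕ m0)
  (X : ℕ → Ξ → Ω)

/-- A `𝒢 t`-measurable version of the conditional law of `X t`; the announced forecasts are only
a.e. equal to conditional expectations, so the martingales are built from this version. -/
def condLaw (t : ℕ) (ξ : Ξ) : EuclideanSpace ℝ Ω :=
  WithLp.toLp 2 fun a => ℙ[fun ξ => if X t ξ = a then (1 : ℝ) else 0 | 𝒢 t] ξ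

omit [Fintype Ω] in
lemma measurable_condLaw (t : ℕ) : Measurable[𝒢 t] (condLaw ℙ 𝒢 X t) := by
  have h : Measurable[𝒢 t] fun ξ a => ℙ[fun ξ => if X t ξ = a then (1 : ℝ) else 0 | 𝒢 t] ξ :=
    @measurable_pi_lambda _ _ _ (𝒢 t) _ _ fun _ => stronglyMeasurable_condExp.measurable
  exact (WithLp.measurable_toLp 2 _).comp h

open Classical in
def calibrationSum (p : ℕ → Ξ → EuclideanSpace ℝ Ω) (c : EuclideanSpace ℝ Ω) (T : ℕ) (ξ : Ξ) :
    EuclideanSpace ℝ Ω :=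
  ∑ t ∈ Finset.range T, if p t ξ = c then diracVec (X t ξ) - c else 0

lemma calibrationSum_apply (p : ℕ → Ξ → EuclideanSpace ℝ Ω) (c : EuclideanSpace ℝ Ω) (T : ℕ)
    (ξ : Ξ) (a : Ω) :
    calibrationSum X p c T ξ a = ∑ t ∈ Finset.range T,
      {ξ | p t ξ = c}.indicator (fun ξ => (if X t ξ = a then (1 : ℝ) else 0) - c a) ξ := by
  simp only [calibrationSum, WithLp.ofLp_sum, Finset.sum_apply]
  refine Finset.sum_congr rfl fun t _ => ?_
  by_cases h : p t ξ = c <;> simp [h, diracVec, @eq_comm _ a]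


variable [MeasurableSpace Ω] [MeasurableSingletonClass Ω]

omit [Fintype Ω] in
lemma integrable_ite_eq [IsFiniteMeasure ℙ] {t : ℕ} (hX : Measurable (X t)) (a : Ω) :
    Integrable (fun ξ => if X t ξ = a then (1 : ℝ) else 0) ℙ :=
  Integrable.of_bound
    (Measurable.ite (hX (measurableSet_singleton a)) measurable_const
      measurable_const).aestronglyMeasurable
    1 (ae_of_all _ fun ξ => by split_ifs <;> simp)

lemma condExp_indicator_condLaw_eq_ae_eq_zero [IsFiniteMeasure ℙ] {t : ℕ} (hX : Measurable (X t))
    (c : EuclideanSpace ℝ Ω) (a : Ω) :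
    ℙ[{ξ | condLaw ℙ 𝒢 X t ξ = c}.indicator
      (fun ξ => (if X t ξ = a then (1 : ℝ) else 0) - c a) | 𝒢 t] =ᵐ[ℙ] 0 := by
  have hI := integrable_ite_eq ℙ X hX a
  have hIc : Integrable (fun ξ => (if X t ξ = a then (1 : ℝ) else 0) - c a) ℙ :=
    hI.sub (integrable_const _)
  have hA : MeasurableSet[𝒢 t] {ξ | condLaw ℙ 𝒢 X t ξ = c} :=
    measurable_condLaw ℙ 𝒢 X t (measurableSet_singleton c)
  filter_upwards [condExp_indicator hIc hA, (condExp_sub hI (integrable_const (c a)) (𝒢 t) :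
    ℙ[fun ξ => (if X t ξ = a then (1 : ℝ) else 0) - c a | 𝒢 t] =ᵐ[ℙ] _)] with ξ hind hsub
  by_cases hξ : ξ ∈ {ξ | condLaw ℙ 𝒢 X t ξ = c}
  · have hforecast : ℙ[fun ξ => if X t ξ = a then (1 : ℝ) else 0 | 𝒢 t] ξ = c a :=
      congrArg (fun v : EuclideanSpace ℝ Ω => v a) hξ
    rw [hind, Set.indicator_of_mem hξ]
    refine hsub.trans ?_
    simp [condExp_const (𝒢.le t), hforecast]
  · rw [hind, Set.indicator_of_notMem hξ]
    rfl

lemma martingale_calibrationSum_condLaw_apply [IsFiniteMeasure ℙ]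
    (hX : ∀ t, Measurable[𝒢 (t + 1)] (X t)) (c : EuclideanSpace ℝ Ω) (a : Ω) :
    Martingale (fun T ξ => calibrationSum X (condLaw ℙ 𝒢 X) c T ξ a) 𝒢 ℙ := by
  have hX0 : ∀ t, Measurable (X t) := fun t => (hX t).mono (𝒢.le _) le_rfl
  have hmart := martingale_sum_range_of_condExp_ae_eq_zero
    (Y := fun t => {ξ | condLaw ℙ 𝒢 X t ξ = c}.indicator
      (fun ξ => (if X t ξ = a then (1 : ℝ) else 0) - c a))
    (fun t => ((Measurable.ite (hX t (measurableSet_singleton a)) measurable_const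
      measurable_const).sub measurable_const |>.indicator
        (𝒢.mono t.le_succ _ (measurable_condLaw ℙ 𝒢 X t (measurableSet_singleton c)))
      ).stronglyMeasurable)
    (fun t => ((integrable_ite_eq ℙ X (hX0 t) a).sub (integrable_const _)).indicator
      (𝒢.le t _ (measurable_condLaw ℙ 𝒢 X t (measurableSet_singleton c))))
    (fun t => condExp_indicator_condLaw_eq_ae_eq_zero ℙ 𝒢 X (hX0 t) c a)
  convert hmart using 2 with T
  ext ξ
  simp [calibrationSum_apply]

lemma ae_eventually_abs_calibrationSum_condLaw_apply_lt [IsProbabilityMeasure ℙ]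
    (hX : ∀ t, Measurable[𝒢 (t + 1)] (X t)) (c : EuclideanSpace ℝ Ω) (a : Ω) :
    ∀ᵐ ξ ∂ℙ, ∀ᶠ T in atTop,
      |calibrationSum X (condLaw ℙ 𝒢 X) c T ξ a| < ((T : ℝ) + 1) ^ (7 / 8 : ℝ) := by
  refine (martingale_calibrationSum_condLaw_apply ℙ 𝒢 X hX c a).ae_eventually_abs_lt_rpow
    (B := 1 + |c a|) (by ext ξ; simp [calibrationSum]) fun T ξ => ?_
  rw [calibrationSum_apply, calibrationSum_apply, Finset.sum_range_succ, add_sub_cancel_left,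
    Set.indicator_apply]
  split_ifs
  · simpa using abs_sub (1 : ℝ) (c a)
  · simp
  · simp; positivity

end Forecaster

open Classical in
theorem honest_forecaster_passes_calibration_general
    {Ξ : Type*} {m0 : MeasurableSpace Ξ} (ℙ : Measure Ξ) [IsProbabilityMeasure ℙ]
    (𝒢 : Filtration ℕ m0)
    [MeasurableSpace Ω] [MeasurableSingletonClass Ω]
    (X : ℕ → Ξ → Ω) (hX : ∀ t, Measurable[𝒢 (t + 1)] (X t))
    (p : ℕ → Ξ → EuclideanSpace ℝ Ω)
    (hp : ∀ t a, (fun ξ => p t ξ a) =ᵐ[ℙ]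
      ℙ[(fun ξ => if X t ξ = a then (1 : ℝ) else 0) | 𝒢 t])
    (D : Finset (EuclideanSpace ℝ Ω)) :
    ∃ ε : ℕ → ℝ, (∀ T, 0 < ε T) ∧ Tendsto ε atTop (nhds 0) ∧
      ∀ᵐ ξ ∂ℙ, ∀ᶠ T : ℕ in atTop,
        ∑ c ∈ D, ‖(T : ℝ)⁻¹ • ∑ t ∈ Finset.range T,
            (if p t ξ = c then diracVec (X t ξ) - c else 0)‖ ≤ ε T := by
  set q := condLaw ℙ 𝒢 X
  have hpq : ∀ᵐ ξ ∂ℙ, ∀ t, p t ξ = q t ξ := by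
    refine ae_all_iff.2 fun t => ?_
    filter_upwards [ae_all_iff.2 (hp t)] with ξ hξ
    ext a
    exact hξ a
  have hrate : ∀ᵐ ξ ∂ℙ, ∀ᶠ T in atTop,
      ∀ c ∈ D, ∀ a, |calibrationSum X q c T ξ a| < ((T : ℝ) + 1) ^ (7 / 8 : ℝ) := by
    filter_upwards [ae_all_iff.2 fun c : D => ae_all_iff.2 fun a =>
      ae_eventually_abs_calibrationSum_condLaw_apply_lt ℙ 𝒢 X hX c a] with ξ hξ
    exact (eventually_all_finset D).2 fun c hc => eventually_all.2 (hξ ⟨c, hc⟩)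
  set K : ℝ := 2 * (D.card * Fintype.card Ω + 1)
  refine ⟨fun T => K * ((T : ℝ) + 1) ^ (-(1 / 8) : ℝ), fun T => by positivity, ?_, ?_⟩
  · simpa using ((tendsto_rpow_neg_atTop (by norm_num : (0 : ℝ) < 1 / 8)).comp
      (tendsto_atTop_add_const_right _ 1 tendsto_natCast_atTop_atTop)).const_mul K
  filter_upwards [hpq, hrate] with ξ hpq hrate
  filter_upwards [hrate, eventually_ge_atTop 1] with T hT hT1
  have hr : 0 ≤ ((T : ℝ) + 1) ^ (-(1 / 8) : ℝ) := by positivity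
  calc ∑ c ∈ D, ‖(T : ℝ)⁻¹ • ∑ t ∈ Finset.range T,
          (if p t ξ = c then diracVec (X t ξ) - c else 0)‖
      = ∑ c ∈ D, ‖(T : ℝ)⁻¹ • calibrationSum X q c T ξ‖ := by simp only [calibrationSum, hpq]
    _ ≤ ∑ _c ∈ D, 2 * Fintype.card Ω * ((T : ℝ) + 1) ^ (-(1 / 8) : ℝ) :=
        Finset.sum_le_sum fun c hc =>
          EuclideanSpace.norm_inv_smul_le_of_abs_lt (by exact_mod_cast hT1) (hT c hc)
    _ ≤ K * ((T : ℝ) + 1) ^ (-(1 / 8) : ℝ) := by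
        rw [Finset.sum_const, nsmul_eq_mul]
        nlinarith

open Classical in
/-- There is a sequence of positive error margins `ε_T → 0` such that, almost surely, the
honest forecaster — who at each period announces the conditional law `p_t` of that period's
state given the past — fails the `ε_T`-calibration test only finitely many times. -/
theorem honest_forecaster_passes_calibration
    {Ξ : Type*} {m0 : MeasurableSpace Ξ} (ℙ : Measure Ξ) [IsProbabilityMeasure ℙ]
    (𝒢 : Filtration ℕ m0) (h0 : 𝒢 0 = ⊥)
    [MeasurableSpace Ω] [MeasurableSingletonClass Ω]
    (X : ℕ → Ξ → Ω) (hX : ∀ t, Measurable[𝒢 (t + 1)] (X t))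
    (p : ℕ → Ξ → EuclideanSpace ℝ Ω)
    (hp : ∀ t a, (fun ξ => p t ξ a) =ᵐ[ℙ]
      ℙ[(fun ξ => if X t ξ = a then (1 : ℝ) else 0) | 𝒢 t])
    (D : Finset (EuclideanSpace ℝ Ω)) (hD : ∀ t ξ, p t ξ ∈ D) :
    ∃ ε : ℕ → ℝ, (∀ T, 0 < ε T) ∧ Tendsto ε atTop (nhds 0) ∧
      ∀ᵐ ξ ∂ℙ, ∀ᶠ T : ℕ in atTop,
        ∑ c ∈ D, ‖(T : ℝ)⁻¹ • ∑ t ∈ Finset.range T,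
            (if p t ξ = c then diracVec (X t ξ) - c else 0)‖ ≤ ε T :=
  honest_forecaster_passes_calibration_general ℙ 𝒢 X hX p hp D
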